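/- Let A be an m×n real matrix (m ≥ n) partitioned into row blocks A₁,...,A_p. Let each block have a QR factorization A_i = Q_i R_i with Q_iᵀQ_i = I_n, and let the stacked matrix [R₁; R₂; ...; R_p] have QR factorization with orthonormal-column factor [Q_{1,1}; ...; Q_{p,1}] and upper triangular factor R. Then the block matrix Q with i-th row block Q_i Q_{i,1} satisfies QᵀQ = I_n and A = QR; i.e., the communication-avoiding (TSQR) procedure yields a valid QR factorization of A. -/

import Mathlib

open Matrix Finset

namespace Matrix

variable {ι α n o : Type*} {m : ι → Type*}

def stackRows (B : ∀ i, Matrix (m i) n α) : Matrix ((i : ι) × m i) n α :=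
  of fun x c => B x.1 x.2 c

@[simp]
theorem stackRows_apply (B : ∀ i, Matrix (m i) n α) (i : ι) (r : m i) (c : n) :
    stackRows B ⟨i, r⟩ c = B i r c :=
  rfl

theorem eq_stackRows {M : Matrix ((i : ι) × m i) n α} {B : ∀ i, Matrix (m i) n α}
    (h : ∀ i r c, M ⟨i, r⟩ c = B i r c) : M = stackRows B := by
  ext ⟨i, r⟩ c
  exact h i r c

theorem stackRows_mul [Fintype n] [NonUnitalNonAssocSemiring α]
    (B : ∀ i, Matrix (m i) n α) (N : Matrix n o α) :
    stackRows B * N = stackRows fun i => B i * N := by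
  ext ⟨i, r⟩ c
  simp only [mul_apply, stackRows_apply]

theorem transpose_stackRows_mul_stackRows [Fintype ι] [∀ i, Fintype (m i)]
    [NonUnitalNonAssocSemiring α] (B : ∀ i, Matrix (m i) n α) (C : ∀ i, Matrix (m i) o α) :
    (stackRows B)ᵀ * stackRows C = ∑ i, (B i)ᵀ * C i := by
  ext a b
  simp only [mul_apply, transpose_apply, sum_apply, Fintype.sum_sigma, stackRows_apply]

theorem transpose_mul_mul_of_transpose_mul_self {l : Type*} [Fintype l] [Fintype n]
    [DecidableEq n] [CommSemiring α] {B : Matrix l n α} (hB : Bᵀ * B = 1) (C : Matrix n o α) :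
    (B * C)ᵀ * (B * C) = Cᵀ * C := by
  rw [transpose_mul, Matrix.mul_assoc, ← Matrix.mul_assoc Bᵀ, hB, Matrix.one_mul]

end Matrix

theorem stmt_11_general (p n : ℕ) (m : Fin p → ℕ)
    (A : Matrix ((i : Fin p) × Fin (m i)) (Fin n) ℝ)
    (Qi : (i : Fin p) → Matrix (Fin (m i)) (Fin n) ℝ)
    (Ri : Fin p → Matrix (Fin n) (Fin n) ℝ)
    (hQi : ∀ i, (Qi i)ᵀ * Qi i = 1)
    (hblocks : ∀ (i : Fin p) (r : Fin (m i)) (c : Fin n), A ⟨i, r⟩ c = (Qi i * Ri i) r c)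
    (Q1 : Fin p → Matrix (Fin n) (Fin n) ℝ)
    (R : Matrix (Fin n) (Fin n) ℝ)
    (hstack : ∀ i, Ri i = Q1 i * R)
    (horth : ∑ i, (Q1 i)ᵀ * Q1 i = 1)
    (Q : Matrix ((i : Fin p) × Fin (m i)) (Fin n) ℝ)
    (hQ : ∀ (i : Fin p) (r : Fin (m i)) (c : Fin n), Q ⟨i, r⟩ c = (Qi i * Q1 i) r c) :
    Qᵀ * Q = 1 ∧ A = Q * R := by
  rw [eq_stackRows hQ, eq_stackRows hblocks]
  constructor
  · rw [transpose_stackRows_mul_stackRows, ← horth]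
    exact sum_congr rfl fun i _ => transpose_mul_mul_of_transpose_mul_self (hQi i) (Q1 i)
  · simp only [stackRows_mul, hstack, Matrix.mul_assoc]

/-- Correctness of the communication-avoiding (TSQR) factorization: if each row
block A_i = Q_i R_i with Q_iᵀQ_i = I, and the stacked R_i factor as R_i = Q_{i,1} R
with Σ_i Q_{i,1}ᵀ Q_{i,1} = I and R upper triangular, then the matrix Q whose i-th
row block is Q_i Q_{i,1} has orthonormal columns and A = Q R. -/
theorem stmt_11 (p n : ℕ) (m : Fin p → ℕ) (hm : ∀ i, n ≤ m i)
    (A : Matrix ((i : Fin p) × Fin (m i)) (Fin n) ℝ)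
    (Qi : (i : Fin p) → Matrix (Fin (m i)) (Fin n) ℝ)
    (Ri : Fin p → Matrix (Fin n) (Fin n) ℝ)
    (hQi : ∀ i, (Qi i)ᵀ * Qi i = 1)
    (hRiTri : ∀ i, (Ri i).BlockTriangular (id : Fin n → Fin n))
    (hblocks : ∀ (i : Fin p) (r : Fin (m i)) (c : Fin n), A ⟨i, r⟩ c = (Qi i * Ri i) r c)
    (Q1 : Fin p → Matrix (Fin n) (Fin n) ℝ)
    (R : Matrix (Fin n) (Fin n) ℝ)
    (hRTri : R.BlockTriangular (id : Fin n → Fin n))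
    (hstack : ∀ i, Ri i = Q1 i * R)
    (horth : ∑ i, (Q1 i)ᵀ * Q1 i = 1)
    (Q : Matrix ((i : Fin p) × Fin (m i)) (Fin n) ℝ)
    (hQ : ∀ (i : Fin p) (r : Fin (m i)) (c : Fin n), Q ⟨i, r⟩ c = (Qi i * Q1 i) r c) :
    Qᵀ * Q = 1 ∧ A = Q * R :=
  stmt_11_general p n m A Qi Ri hQi hblocks Q1 R hstack horth Q hQ
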